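/- For every nonnegative integer n and complex number x, let H_n(x) = ∑_{k=0}^n (2x+1)·C(x,k)·C(x+k,k)·(-2)^k / ((2k+1)·C(2k,k)). Then H_n(x) + H_n(x+2) = (-1)^n · 2^{n+1} · (2x+3) · C(x+1,n)·C(x+1+n,n) / ((2n+1)·C(2n,n)). -/

import Mathlib

/-!
Since `C(x,k)·C(x+k,k) = (x+k)(x+k-1)⋯(x-k+1) / k!²` and `(2k+1)·C(2k,k)·k!² = (2k+1)!`, the
`k`-th summand of `H_n(x)` is `(2x+1)(-2)^k (x+k)⋯(x-k+1) / (2k+1)!`. The identity then follows by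
telescoping: the `(n+1)`-st summands of `H_n(x)` and `H_n(x+2)` add up to the difference of the
right-hand sides for `n+1` and `n`, because each product of consecutive factors involved is
`(x+n+1)(x+n)⋯(x-n+2)` (the one in the right-hand side for `n`) times at most two linear factors.
-/

open Finset

/-- Generalized binomial coefficient `C(x,k) = x(x-1)⋯(x-k+1)/k!`. -/
noncomputable def gbinom (x : ℂ) (k : ℕ) : ℂ :=
  (∏ i ∈ Finset.range k, (x - i)) / (k.factorial : ℂ)

/-- `H_n(x) = ∑_{k=0}^n (2x+1)·C(x,k)·C(x+k,k)·(-2)^k / ((2k+1)·C(2k,k))`. -/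
noncomputable def H (n : ℕ) (x : ℂ) : ℂ :=
  ∑ k ∈ Finset.range (n + 1),
    (2 * x + 1) * gbinom x k * gbinom (x + k) k * (-2 : ℂ) ^ k /
      ((2 * k + 1) * (Nat.choose (2 * k) k : ℂ))

noncomputable section

def centralProd {R : Type*} [CommRing R] (k : ℕ) (x : R) : R :=
  ∏ i ∈ range (2 * k), (x + k - i)

section CentralProd

variable {R : Type*} [CommRing R] (n : ℕ) (x : R)

theorem centralProd_eq_mul :
    centralProd n x = (∏ i ∈ range n, (x + n - i)) * ∏ i ∈ range n, (x - i) := by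
  rw [centralProd, two_mul, prod_range_add]
  congr 1
  refine prod_congr rfl fun i _ => ?_
  push_cast
  ring

theorem centralProd_succ :
    centralProd (n + 1) x = (x + n + 1) * (x - n) * centralProd n x := by
  rw [centralProd, centralProd, show 2 * (n + 1) = 2 * n + 1 + 1 by ring, prod_range_succ,
    prod_range_succ']
  rw [show ∏ i ∈ range (2 * n), (x + ((n + 1 : ℕ) : R) - ((i + 1 : ℕ) : R)) =
      ∏ i ∈ range (2 * n), (x + n - i) from prod_congr rfl fun i _ => by push_cast; ring]
  push_cast
  ring

theorem centralProd_succ_eq_mul_centralProd_add_one :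
    centralProd (n + 1) x = centralProd n (x + 1) * (x - n + 1) * (x - n) := by
  rw [centralProd, centralProd, show 2 * (n + 1) = 2 * n + 1 + 1 by ring, prod_range_succ,
    prod_range_succ]
  rw [show ∏ i ∈ range (2 * n), (x + ((n + 1 : ℕ) : R) - i) =
      ∏ i ∈ range (2 * n), (x + 1 + n - i) from prod_congr rfl fun i _ => by push_cast; ring]
  push_cast
  ring

theorem centralProd_succ_add_one :
    centralProd (n + 1) (x + 1) = (x + n + 2) * (x + n + 1) * centralProd n x := by
  rw [centralProd, centralProd, show 2 * (n + 1) = 2 * n + 1 + 1 by ring, prod_range_succ',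
    prod_range_succ']
  rw [show ∏ i ∈ range (2 * n), (x + 1 + ((n + 1 : ℕ) : R) - ((i + 1 + 1 : ℕ) : R)) =
      ∏ i ∈ range (2 * n), (x + n - i) from prod_congr rfl fun i _ => by push_cast; ring]
  push_cast
  ring

end CentralProd

theorem Nat.factorial_two_mul_add_one_eq (k : ℕ) :
    (2 * k + 1).factorial = (2 * k + 1) * (2 * k).choose k * k.factorial ^ 2 := by
  have h := Nat.choose_mul_factorial_mul_factorial (show k ≤ 2 * k by omega)
  rw [show 2 * k - k = k by omega] at h
  rw [Nat.factorial_succ, ← h]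
  ring

theorem gbinom_mul_gbinom_add_div (x : ℂ) (k : ℕ) :
    gbinom x k * gbinom (x + k) k / ((2 * k + 1) * ((2 * k).choose k : ℂ)) =
      centralProd k x / (2 * k + 1).factorial := by
  have hfac : (k.factorial : ℂ) ≠ 0 := Nat.cast_ne_zero.2 k.factorial_ne_zero
  rw [gbinom, gbinom, centralProd_eq_mul, Nat.factorial_two_mul_add_one_eq]
  push_cast
  field_simp

section Telescoping

variable {K : Type*} [Field K] [CharZero K]

def hTerm (k : ℕ) (x : K) : K :=
  (2 * x + 1) * (-2) ^ k * centralProd k x / (2 * k + 1).factorial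

theorem hTerm_succ_add_hTerm_succ_add_two (n : ℕ) (x : K) :
    hTerm (n + 1) x + hTerm (n + 1) (x + 2) =
      2 * (-2) ^ (n + 1) * (2 * x + 3) * centralProd (n + 1) (x + 1) /
          (2 * (n + 1) + 1).factorial -
        2 * (-2) ^ n * (2 * x + 3) * centralProd n (x + 1) / (2 * n + 1).factorial := by
  have hfac : ((2 * (n + 1) + 1).factorial : K) =
      (2 * n + 3) * (2 * n + 2) * (2 * n + 1).factorial := by
    rw [show 2 * (n + 1) + 1 = 2 * n + 1 + 1 + 1 by ring, Nat.factorial_succ, Nat.factorial_succ]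
    push_cast
    ring
  have h₀ : ((2 * n + 1).factorial : K) ≠ 0 := Nat.cast_ne_zero.2 (Nat.factorial_ne_zero _)
  have h₁ : (2 * n + 3 : K) ≠ 0 := by exact_mod_cast (show 2 * n + 3 ≠ 0 by omega)
  have h₂ : (2 * n + 2 : K) ≠ 0 := by exact_mod_cast (show 2 * n + 2 ≠ 0 by omega)
  rw [hTerm, hTerm, centralProd_succ_eq_mul_centralProd_add_one n x, centralProd_succ n (x + 1),
    show x + 2 = x + 1 + 1 by ring, centralProd_succ_add_one n (x + 1), hfac]
  field_simp
  ring

theorem sum_hTerm_add_sum_hTerm_add_two (n : ℕ) (x : K) :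
    ∑ k ∈ range (n + 1), hTerm k x + ∑ k ∈ range (n + 1), hTerm k (x + 2) =
      2 * (-2) ^ n * (2 * x + 3) * centralProd n (x + 1) / (2 * n + 1).factorial := by
  induction n with
  | zero =>
    simp only [zero_add, sum_range_one, hTerm, centralProd, mul_zero, prod_range_zero]
    ring
  | succ n ih =>
    rw [sum_range_succ, sum_range_succ (n := n + 1), add_add_add_comm, ih,
      hTerm_succ_add_hTerm_succ_add_two]
    ring

end Telescoping

theorem H_eq_sum_hTerm (n : ℕ) (x : ℂ) : H n x = ∑ k ∈ range (n + 1), hTerm k x := by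
  refine sum_congr rfl fun k _ => ?_
  rw [hTerm]
  linear_combination (2 * x + 1) * (-2) ^ k * gbinom_mul_gbinom_add_div x k

end

theorem stmt4 (n : ℕ) (x : ℂ) :
    H n x + H n (x + 2) =
      (-1 : ℂ) ^ n * 2 ^ (n + 1) * (2 * x + 3) * gbinom (x + 1) n * gbinom (x + 1 + n) n /
        ((2 * n + 1) * (Nat.choose (2 * n) n : ℂ)) := by
  rw [H_eq_sum_hTerm, H_eq_sum_hTerm, sum_hTerm_add_sum_hTerm_add_two,
    neg_pow (2 : ℂ)]
  linear_combination -(-1) ^ n * 2 ^ n * 2 * (2 * x + 3) * gbinom_mul_gbinom_add_div (x + 1) n
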